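/- arXiv:1412.4311 — 2 statements merged into one kernel-verified Lean document; each statement's English description precedes it below -/
import Mathlib

section
/- Let D be a database instance in which all tuples are endogenous and Q a monotone Boolean query. (a) If t is an actual cause for Q and Γ ∈ CT(t), then D \ (Γ ∪ {t}) is an S-repair of D with respect to ¬Q. (b) If t is a most responsible actual cause for Q and Γ is a contingency set for t of minimum cardinality, then D \ (Γ ∪ {t}) is a C-repair of D with respect to ¬Q. (Corollary 2) -/
open scoped Classical

variable {α : Type*} [DecidableEq α]

/-- A monotone Boolean query on database instances (finite sets of tuples). -/
def MonotoneQuery (Q : Finset α → Prop) : Prop :=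
  ∀ ⦃X Y : Finset α⦄, X ⊆ Y → Q X → Q Y

/-- `Γ` is a contingency set for tuple `t` wrt query `Q`, instance `D`,
endogenous part `Dn`. -/
def IsContingency (D Dn : Finset α) (Q : Finset α → Prop) (t : α) (Γ : Finset α) : Prop :=
  Γ ⊆ Dn ∧ t ∉ Γ ∧ Q (D \ Γ) ∧ ¬ Q (D \ (Γ ∪ {t}))

/-- `t` is an actual cause for `Q`. -/
def IsActualCause (D Dn : Finset α) (Q : Finset α → Prop) (t : α) : Prop :=
  t ∈ Dn ∧ ∃ Γ : Finset α, IsContingency D Dn Q t Γ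

/-- Minimum cardinality of a contingency set for `t`. -/
noncomputable def minContingency (D Dn : Finset α) (Q : Finset α → Prop) (t : α) : ℕ :=
  sInf {m : ℕ | ∃ Γ : Finset α, IsContingency D Dn Q t Γ ∧ Γ.card = m}

/-- Responsibility of `t`: `1/(1+m)` with `m` the minimum size of a contingency set,
and `0` if `t` is not an actual cause. -/
noncomputable def resp (D Dn : Finset α) (Q : Finset α → Prop) (t : α) : ℚ :=
  if IsActualCause D Dn Q t then 1 / (1 + (minContingency D Dn Q t : ℚ)) else 0

/-- `t` is a most responsible actual cause. -/
def IsMostResponsibleCause (D Dn : Finset α) (Q : Finset α → Prop) (t : α) : Prop :=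
  IsActualCause D Dn Q t ∧ ∀ t' : α, ¬ resp D Dn Q t < resp D Dn Q t'

/-- `D'` is an S-repair of `D` wrt the denial constraint `¬ Q`. -/
def IsSRepair (D : Finset α) (Q : Finset α → Prop) (D' : Finset α) : Prop :=
  D' ⊆ D ∧ ¬ Q D' ∧ ∀ D'' : Finset α, D'' ⊆ D → ¬ Q D'' → D' ⊆ D'' → D'' = D'

/-- `D'` is a C-repair of `D` wrt the denial constraint `¬ Q`. -/
def IsCRepair (D : Finset α) (Q : Finset α → Prop) (D' : Finset α) : Prop :=
  D' ⊆ D ∧ ¬ Q D' ∧ ∀ D'' : Finset α, D'' ⊆ D → ¬ Q D'' → D''.card ≤ D'.card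

/-- `Γ ∈ CT(t)`: `Γ` is an S-minimal contingency set for `t`. -/
def InCT (D Dn : Finset α) (Q : Finset α → Prop) (t : α) (Γ : Finset α) : Prop :=
  IsContingency D Dn Q t Γ ∧ ∀ Γ'' : Finset α, Γ'' ⊂ Γ → Q (D \ (Γ'' ∪ {t}))

/-- `𝔖(D)`: S-minimal subsets of `D` satisfying `Q`. -/
def Sfam (D : Finset α) (Q : Finset α → Prop) : Set (Finset α) :=
  {s | s ⊆ D ∧ Q s ∧ ∀ s' : Finset α, s' ⊂ s → ¬ Q s'}

/-- Subsets of `Dn` contained in some `s' ∈ 𝔖(D)` whose remainder is exogenous. -/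
def SnPre (D Dn Dx : Finset α) (Q : Finset α → Prop) : Set (Finset α) :=
  {s | s ⊆ Dn ∧ ∃ s' ∈ Sfam D Q, s ⊆ s' ∧ s' \ s ⊆ Dx}

/-- `𝔖ⁿ(D)`: the inclusion-minimal elements of `SnPre`. -/
def SnFam (D Dn Dx : Finset α) (Q : Finset α → Prop) : Set (Finset α) :=
  {s ∈ SnPre D Dn Dx Q | ∀ s' ∈ SnPre D Dn Dx Q, s' ⊆ s → s' = s}

/-- `H` is a hitting set for `𝔖ⁿ(D)`. -/
def IsHittingSet (D Dn Dx : Finset α) (Q : Finset α → Prop) (H : Finset α) : Prop :=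
  H ⊆ Dn ∧ ∀ s ∈ SnFam D Dn Dx Q, (H ∩ s).Nonempty

/-- `H` is an S-minimal hitting set for `𝔖ⁿ(D)`. -/
def IsSMinimalHittingSet (D Dn Dx : Finset α) (Q : Finset α → Prop) (H : Finset α) : Prop :=
  IsHittingSet D Dn Dx Q H ∧ ∀ H' : Finset α, H' ⊂ H → ¬ IsHittingSet D Dn Dx Q H'

/-- `H` is a minimum-cardinality hitting set for `𝔖ⁿ(D)`. -/
def IsMinimumHittingSet (D Dn Dx : Finset α) (Q : Finset α → Prop) (H : Finset α) : Prop :=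
  IsHittingSet D Dn Dx Q H ∧ ∀ H' : Finset α, IsHittingSet D Dn Dx Q H' → H.card ≤ H'.card

/-- `Δ` is a diagnosis for the diagnosis problem associated with `Q`. -/
def IsDiagnosis (D Dn : Finset α) (Q : Finset α → Prop) (Δ : Finset α) : Prop :=
  Δ ⊆ Dn ∧ ¬ Q (D \ Δ)

/-- `Δ ∈ 𝒟(ℳ,t)`: `Δ` is an inclusion-minimal diagnosis containing `t`. -/
def IsMinimalDiagnosisWith (D Dn : Finset α) (Q : Finset α → Prop) (t : α)
    (Δ : Finset α) : Prop :=
  IsDiagnosis D Dn Q Δ ∧ t ∈ Δ ∧ ∀ Δ' : Finset α, Δ' ⊂ Δ → ¬ IsDiagnosis D Dn Q Δ'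

/-- `Δ ∈ MCD(ℳ,t)`: `Δ` is an element of `𝒟(ℳ,t)` of minimum cardinality. -/
def IsMCDWith (D Dn : Finset α) (Q : Finset α → Prop) (t : α) (Δ : Finset α) : Prop :=
  IsMinimalDiagnosisWith D Dn Q t Δ ∧
    ∀ Δ' : Finset α, IsMinimalDiagnosisWith D Dn Q t Δ' → Δ.card ≤ Δ'.card

/-! Removing `Γ ∪ {t}` falsifies `Q`, and S-minimality of `Γ` says that putting back any single
removed tuple makes `Q` true again; for a monotone query this is exactly maximality of the remainder.
For C-repairs, extend a falsifying `D'' ⊆ D` to an S-repair `N`. Any tuple `x ∈ D \ N` is then an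
actual cause with contingency set `(D \ N).erase x`, so a most responsible cause `t` has
`|Γ| ≤ |D \ N| - 1`, i.e. `|D''| ≤ |N| ≤ |D \ (Γ ∪ {t})|`. -/

section Repairs

variable {D D' Dn Γ : Finset α} {Q : Finset α → Prop} {t : α}

theorem isSRepair_iff_forall_insert (hmono : MonotoneQuery Q) :
    IsSRepair D Q D' ↔ D' ⊆ D ∧ ¬ Q D' ∧ ∀ x ∈ D, x ∉ D' → Q (insert x D') := by
  refine ⟨fun ⟨hsub, hQ, hmax⟩ => ⟨hsub, hQ, fun x hx hx' => ?_⟩, fun ⟨hsub, hQ, hins⟩ => ?_⟩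
  · by_contra hQx
    have := hmax _ (Finset.insert_subset hx hsub) hQx (Finset.subset_insert x D')
    exact hx' (this ▸ Finset.mem_insert_self x D')
  · refine ⟨hsub, hQ, fun D'' hD'' hQ'' hle => ?_⟩
    by_contra hne
    obtain ⟨x, hx, hx'⟩ := Finset.exists_of_ssubset (hle.ssubset_of_ne (Ne.symm hne))
    exact hQ'' (hmono (Finset.insert_subset hx hle) (hins x (hD'' hx) hx'))

theorem exists_isSRepair_superset (hsub : D' ⊆ D) (hQ : ¬ Q D') :
    ∃ N, D' ⊆ N ∧ IsSRepair D Q N := by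
  set S := D.powerset.filter fun X => D' ⊆ X ∧ ¬ Q X
  obtain ⟨N, hle, hN⟩ := S.exists_le_maximal (a := D') (by simp [S, hsub, hQ])
  obtain ⟨hND, -, hQN⟩ := by simpa [S] using hN.prop
  refine ⟨N, hle, hND, hQN, fun D'' hD'' hQ'' hNle => ?_⟩
  exact le_antisymm (hN.2 (by simp [S, hD'', hQ'', hle.trans hNle]) hNle) hNle

theorem InCT.isSRepair (hmono : MonotoneQuery Q) (hΓ : InCT D Dn Q t Γ) :
    IsSRepair D Q (D \ (Γ ∪ {t})) := by
  obtain ⟨⟨-, -, hQΓ, hQΓt⟩, hmin⟩ := hΓ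
  refine (isSRepair_iff_forall_insert hmono).2 ⟨Finset.sdiff_subset, hQΓt, fun x hxD hx => ?_⟩
  rcases (by simp [hxD] at hx; tauto : x ∈ Γ ∨ x = t) with hxΓ | rfl
  · refine hmono ?_ (hmin _ (Finset.erase_ssubset hxΓ))
    intro y
    by_cases hyx : y = x <;> simp_all
  · refine hmono ?_ hQΓ
    intro y
    by_cases hyx : y = x <;> simp_all

theorem isContingency_erase_sdiff {x : α} (hsub : D' ⊆ D) (hxD : x ∈ D) (hx : x ∉ D')
    (hQx : Q (insert x D')) (hQ : ¬ Q D') :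
    IsContingency D D Q x ((D \ D').erase x) := by
  have hxc : x ∈ D \ D' := Finset.mem_sdiff.2 ⟨hxD, hx⟩
  have hrestore : D \ (D \ D').erase x = insert x D' := by
    rw [Finset.sdiff_erase hxD, Finset.sdiff_sdiff_eq_self hsub]
  have hremove : D \ ((D \ D').erase x ∪ {x}) = D' := by
    rw [Finset.union_singleton, Finset.insert_erase hxc, Finset.sdiff_sdiff_eq_self hsub]
  exact ⟨(Finset.erase_subset _ _).trans Finset.sdiff_subset, Finset.notMem_erase x _,
    by rwa [hrestore], by rwa [hremove]⟩

theorem IsContingency.minContingency_le (hΓ : IsContingency D Dn Q t Γ) :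
    minContingency D Dn Q t ≤ Γ.card :=
  Nat.sInf_le ⟨Γ, hΓ, rfl⟩

theorem IsContingency.minContingency_eq (hΓ : IsContingency D Dn Q t Γ)
    (hmin : ∀ Γ', IsContingency D Dn Q t Γ' → Γ.card ≤ Γ'.card) :
    minContingency D Dn Q t = Γ.card :=
  le_antisymm hΓ.minContingency_le <|
    le_csInf ⟨_, Γ, hΓ, rfl⟩ fun _ ⟨Γ', hΓ', hcard⟩ => hcard ▸ hmin Γ' hΓ'

theorem resp_of_isActualCause (ht : IsActualCause D Dn Q t) :
    resp D Dn Q t = 1 / (1 + (minContingency D Dn Q t : ℚ)) :=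
  if_pos ht

theorem IsMostResponsibleCause.minContingency_le {t' : α} (ht : IsMostResponsibleCause D Dn Q t)
    (ht' : IsActualCause D Dn Q t') :
    minContingency D Dn Q t ≤ minContingency D Dn Q t' := by
  have hle := not_lt.1 (ht.2 t')
  rw [resp_of_isActualCause ht.1, resp_of_isActualCause ht',
    one_div_le_one_div (by positivity) (by positivity)] at hle
  exact_mod_cast (add_le_add_iff_left 1).1 hle

theorem card_le_card_sdiff_of_isContingency (hmono : MonotoneQuery Q)
    (hΓ : IsContingency D D Q t Γ)
    (hmin : ∀ t', IsActualCause D D Q t' → Γ.card ≤ minContingency D D Q t')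
    {D'' : Finset α} (hD'' : D'' ⊆ D) (hQ'' : ¬ Q D'') :
    D''.card ≤ (D \ (Γ ∪ {t})).card := by
  obtain ⟨N, hle, hN⟩ := exists_isSRepair_superset hD'' hQ''
  obtain ⟨hND, hQN, hins⟩ := (isSRepair_iff_forall_insert hmono).1 hN
  obtain ⟨x, hxD, hxN⟩ : ∃ x ∈ D, x ∉ N := Finset.not_subset.1 fun hDN =>
    hQN (hmono hDN (hmono Finset.sdiff_subset hΓ.2.2.1))
  have hx := isContingency_erase_sdiff hND hxD hxN (hins x hxD hxN) hQN
  have hΓx : Γ.card + 1 ≤ (D \ N).card := by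
    have := (hmin x ⟨hxD, _, hx⟩).trans hx.minContingency_le
    rw [← Finset.card_erase_add_one (Finset.mem_sdiff.2 ⟨hxD, hxN⟩)]
    omega
  have hΓt : (D ∩ (Γ ∪ {t})).card ≤ Γ.card + 1 :=
    (Finset.card_le_card Finset.inter_subset_right).trans (Finset.card_union_le _ _)
  have hNsplit := Finset.card_sdiff_add_card_eq_card hND
  have hDsplit := Finset.card_sdiff_add_card_inter D (Γ ∪ {t})
  have hD''N := Finset.card_le_card hle
  omega

end Repairs

/-- Corollary 2: removing a cause together with one of its S-minimal (resp.
C-minimal) contingency sets yields an S-repair (resp. a C-repair). -/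
theorem repairs_from_causes (D : Finset α) (Q : Finset α → Prop) (hmono : MonotoneQuery Q)
    (t : α) (Γ : Finset α) :
    (IsActualCause D D Q t → InCT D D Q t Γ → IsSRepair D Q (D \ (Γ ∪ {t}))) ∧
    (IsMostResponsibleCause D D Q t → IsContingency D D Q t Γ →
      (∀ Γ' : Finset α, IsContingency D D Q t Γ' → Γ.card ≤ Γ'.card) →
      IsCRepair D Q (D \ (Γ ∪ {t}))) := by
  refine ⟨fun _ hΓ => hΓ.isSRepair hmono, fun ht hΓ hmin => ?_⟩
  have hmin' : ∀ t', IsActualCause D D Q t' → Γ.card ≤ minContingency D D Q t' :=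
    fun t' ht' => hΓ.minContingency_eq hmin ▸ ht.minContingency_le ht'
  exact ⟨Finset.sdiff_subset, hΓ.2.2.2,
    fun _ hD'' hQ'' => card_le_card_sdiff_of_isContingency hmono hΓ hmin' hD'' hQ''⟩
end

section
/- Let D be a database instance in which all tuples are endogenous and Q a monotone Boolean query. For every tuple t that is an actual cause for Q, there exists an S-repair D' of D with respect to ¬Q such that t ∉ D'. (Corollary 3(a)) -/
open scoped Classical

variable {α : Type*} [DecidableEq α]

theorem exists_isSRepair_superset_s9 {β : Type*} {D B : Finset β} {Q : Finset β → Prop}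
    (hBD : B ⊆ D) (hB : ¬ Q B) : ∃ D' : Finset β, IsSRepair D Q D' ∧ B ⊆ D' := by
  have hmem : B ∈ D.powerset.filter (¬ Q ·) :=
    Finset.mem_filter.mpr ⟨Finset.mem_powerset.mpr hBD, hB⟩
  obtain ⟨D', hBD', hmax, hle⟩ := Finset.exists_le_maximal _ hmem
  obtain ⟨hD'D, hD'⟩ := Finset.mem_filter.mp hmax
  refine ⟨D', ⟨Finset.mem_powerset.mp hD'D, hD', fun D'' hD''D hD'' hD'D'' => ?_⟩, hBD'⟩
  exact (hle (Finset.mem_filter.mpr ⟨Finset.mem_powerset.mpr hD''D, hD''⟩) hD'D'').antisymm hD'D''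

/-- Once `t` is put back, a superset of `D \ (Γ ∪ {t})` contains `D \ Γ`, which satisfies `Q`. -/
theorem IsContingency.notMem_of_superset {D Dn Γ D' : Finset α} {Q : Finset α → Prop} {t : α}
    (hΓ : IsContingency D Dn Q t Γ) (hmono : MonotoneQuery Q)
    (hsub : D \ (Γ ∪ {t}) ⊆ D') (hD' : ¬ Q D') : t ∉ D' := by
  intro ht
  refine hD' (hmono (fun x hx => ?_) hΓ.2.2.1)
  obtain ⟨hxD, hxΓ⟩ := Finset.mem_sdiff.mp hx
  by_cases hxt : x = t
  · exact hxt ▸ ht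
  · exact hsub (Finset.mem_sdiff.mpr ⟨hxD, by simp [hxΓ, hxt]⟩)

/-- Corollary 3(a): every actual cause is excluded from some S-repair. -/
theorem cause_excluded_from_some_srepair (D : Finset α) (Q : Finset α → Prop)
    (hmono : MonotoneQuery Q) (t : α) (hc : IsActualCause D D Q t) :
    ∃ D' : Finset α, IsSRepair D Q D' ∧ t ∉ D' := by
  obtain ⟨-, Γ, hΓ⟩ := hc
  obtain ⟨D', hD', hsub⟩ := exists_isSRepair_superset_s9 Finset.sdiff_subset hΓ.2.2.2
  exact ⟨D', hD', hΓ.notMem_of_superset hmono hsub hD'.2.1⟩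
end
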